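/- Define ζ(t) = ((3/4)·(t·√(t²−1) − log(t + √(t²−1))))^{2/3} for t > 1. Then, as t → 1⁺, 2^{−1/3}·ζ(t) = (t−1) + (1/10)(t−1)² − (2/175)(t−1)³ + (37/15750)(t−1)⁴ + O((t−1)⁵). -/

import Mathlib

open Asymptotics

/-- The Liouville variable `ζ(t) = ((3/4)(t√(t²−1) − log(t+√(t²−1))))^{2/3}` of the
turning point analysis for Hermite polynomials, for `t > 1`. -/
noncomputable def zetaHer (t : ℝ) : ℝ :=
  ((3 / 4) * (t * Real.sqrt (t ^ 2 - 1) - Real.log (t + Real.sqrt (t ^ 2 - 1)))) ^ ((2 : ℝ) / 3)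

/-! With `x = √(t²−1)/t` the bracket in `ζ(t)` equals `x/(1−x²) − artanh x =
∑_{k≥1} (2k/(2k+1)) x^{2k+1}`, a series with coefficients in `[0, 1]`; cutting it after `x⁹`, as
`x³Q(x²)`, costs at most `x¹¹/(1−x²)`. Hence `(2^{−1/3}ζ)³ = (9/32)(x/(1−x²) − artanh x)²` is
`(9/32) x⁶ Q(x²)² + O((t−1)⁷)`, and since `x² = (t²−1)/t²`, comparing this with the cube of the
quartic expansion becomes a polynomial inequality once `t¹⁸` is cleared. As the quartic is of
size `t−1`, taking cube roots via `|a−b| b² ≤ |a³−b³|` loses only a factor `(t−1)²`. -/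

open Real

theorem Real.hasSum_artanh {x : ℝ} (hx : |x| < 1) :
    HasSum (fun k : ℕ => x ^ (2 * k + 1) / (2 * k + 1)) (artanh x) := by
  obtain ⟨hx₁, hx₂⟩ := abs_lt.mp hx
  rw [artanh_eq_half_log ⟨hx₁.le, hx₂.le⟩, log_div (by linarith) (by linarith)]
  convert! (hasSum_log_sub_log_of_abs_lt_one hx).mul_left (1 / 2) using 2 with k
  ring

theorem hasSum_pow_two_mul_add_one {x : ℝ} (hx : |x| < 1) (n : ℕ) :
    HasSum (fun k : ℕ => x ^ (2 * (k + n) + 1)) (x ^ (2 * n + 1) / (1 - x ^ 2)) := by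
  have hx2 : |x ^ 2| < 1 := by rw [abs_pow]; exact pow_lt_one₀ (abs_nonneg x) hx two_ne_zero
  convert! (hasSum_geometric_of_abs_lt_one hx2).mul_left (x ^ (2 * n + 1)) using 1
  ext k
  ring

theorem hasSum_div_one_sub_sq_sub_artanh {x : ℝ} (hx : |x| < 1) :
    HasSum (fun k : ℕ => 2 * k / (2 * k + 1) * x ^ (2 * k + 1)) (x / (1 - x ^ 2) - artanh x) := by
  convert! (hasSum_pow_two_mul_add_one hx 0).sub (hasSum_artanh hx) using 2 with k
  · rw [add_zero]
    field_simp
    ring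
  · norm_num

theorem div_one_sub_sq_sub_artanh_sub_sum_mem_Icc {x : ℝ} (hx₀ : 0 ≤ x) (hx₁ : x < 1) (n : ℕ) :
    x / (1 - x ^ 2) - artanh x - ∑ k ∈ Finset.range n, 2 * k / (2 * k + 1) * x ^ (2 * k + 1) ∈
      Set.Icc 0 (x ^ (2 * n + 1) / (1 - x ^ 2)) := by
  have hx : |x| < 1 := by rwa [abs_of_nonneg hx₀]
  have htail := (hasSum_nat_add_iff' n).mpr (hasSum_div_one_sub_sq_sub_artanh hx)
  have hcoeff (k : ℕ) : 0 ≤ (2 * k / (2 * k + 1) : ℝ) ∧ (2 * k / (2 * k + 1) : ℝ) ≤ 1 :=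
    ⟨by positivity, div_le_one_of_le₀ (by linarith) (by positivity)⟩
  refine ⟨htail.nonneg fun k => ?_, hasSum_le (fun k => ?_) htail (hasSum_pow_two_mul_add_one hx n)⟩
  · exact mul_nonneg (hcoeff _).1 (by positivity)
  · exact mul_le_of_le_one_left (by positivity) (hcoeff _).2

theorem mul_sqrt_sub_log_add_sqrt_eq {t x : ℝ} (ht : 1 ≤ t) (hx : x = √(t ^ 2 - 1) / t) :
    t * √(t ^ 2 - 1) - log (t + √(t ^ 2 - 1)) = x / (1 - x ^ 2) - artanh x := by
  set r := √(t ^ 2 - 1)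
  subst hx
  have ht₀ : 0 < t := by linarith
  have hr₀ : 0 ≤ r := sqrt_nonneg _
  have hr2 : r ^ 2 = t ^ 2 - 1 := sq_sqrt (by nlinarith)
  have hrt : r < t := by nlinarith
  have hrt₁ : r / t ∈ Set.Icc (-1) 1 :=
    ⟨by linarith [div_nonneg hr₀ ht₀.le], (div_le_one ht₀).mpr hrt.le⟩
  have hquot : (1 + r / t) / (1 - r / t) = (t + r) ^ 2 := by
    rw [div_eq_iff (sub_ne_zero.mpr ((div_lt_one ht₀).mpr hrt).ne')]
    field_simp
    linear_combination hr2
  have hden : 1 - (r / t) ^ 2 = 1 / t ^ 2 := by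
    field_simp
    linear_combination -hr2
  rw [artanh_eq_half_log hrt₁, hquot, log_pow, hden]
  field_simp
  ring

theorem div_one_sub_sq_sub_artanh_nonneg {x : ℝ} (hx₀ : 0 ≤ x) (hx₁ : x < 1) :
    0 ≤ x / (1 - x ^ 2) - artanh x := by
  simpa using (div_one_sub_sq_sub_artanh_sub_sum_mem_Icc hx₀ hx₁ 0).1

theorem abs_sq_div_one_sub_sq_sub_artanh_sub_le {x : ℝ} (hx₀ : 0 ≤ x) (hx : x ^ 2 ≤ 1 / 2) :
    |(x / (1 - x ^ 2) - artanh x) ^ 2 -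
        (x ^ 2) ^ 3 * (2 / 3 + 4 / 5 * x ^ 2 + 6 / 7 * (x ^ 2) ^ 2 + 8 / 9 * (x ^ 2) ^ 3) ^ 2| ≤
      10 * x ^ 14 := by
  obtain ⟨hlow, hupp⟩ := div_one_sub_sq_sub_artanh_sub_sum_mem_Icc hx₀ (by nlinarith) 5
  set Φ := x / (1 - x ^ 2) - artanh x
  set Q := 2 / 3 + 4 / 5 * x ^ 2 + 6 / 7 * (x ^ 2) ^ 2 + 8 / 9 * (x ^ 2) ^ 3
  have hsum : ∑ k ∈ Finset.range 5, 2 * k / (2 * k + 1) * x ^ (2 * k + 1) = x ^ 3 * Q := by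
    simp only [Finset.sum_range_succ, Finset.sum_range_zero]
    norm_num
    ring
  have hx8 : x ^ 8 ≤ 1 / 16 := by nlinarith [pow_le_pow_left₀ (sq_nonneg x) hx 4]
  have hrem : x ^ 11 / (1 - x ^ 2) ≤ 2 * x ^ 11 := by
    rw [div_le_iff₀ (by linarith)]
    nlinarith [pow_nonneg hx₀ 11]
  have hQ : Q ≤ 2 := by
    simp only [Q]
    nlinarith [pow_le_pow_left₀ (sq_nonneg x) hx 2, pow_le_pow_left₀ (sq_nonneg x) hx 3]
  have hQ₀ : 0 ≤ Q := by simp only [Q]; positivity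
  have ha₀ : 0 ≤ x ^ 3 * Q := mul_nonneg (pow_nonneg hx₀ 3) hQ₀
  have ha : x ^ 3 * Q ≤ 2 * x ^ 3 := by rw [mul_comm 2]; gcongr
  rw [hsum] at hlow hupp
  have hΦa : Φ - x ^ 3 * Q ≤ 2 * x ^ 11 := by linarith
  rw [show Φ ^ 2 - (x ^ 2) ^ 3 * Q ^ 2 = (Φ - x ^ 3 * Q) * (Φ + x ^ 3 * Q) by ring,
    abs_of_nonneg (mul_nonneg hlow (by linarith))]
  calc (Φ - x ^ 3 * Q) * (Φ + x ^ 3 * Q) ≤ 2 * x ^ 11 * (2 * x ^ 11 + 4 * x ^ 3) :=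
        mul_le_mul hΦa (by linarith) (by linarith) (by positivity)
    _ ≤ 10 * x ^ 14 := by nlinarith [mul_le_mul_of_nonneg_left hx8 (pow_nonneg hx₀ 14)]

theorem rpow_div_three_pow_three {b : ℝ} (hb : 0 ≤ b) (c : ℝ) : (b ^ (c / 3)) ^ 3 = b ^ c := by
  rw [← rpow_natCast, ← rpow_mul hb]
  norm_num

theorem abs_sub_mul_sq_le_abs_pow_three_sub {a b : ℝ} (ha : 0 ≤ a) (hb : 0 ≤ b) :
    |a - b| * b ^ 2 ≤ |a ^ 3 - b ^ 3| := by
  rw [show a ^ 3 - b ^ 3 = (a - b) * (a ^ 2 + a * b + b ^ 2) by ring, abs_mul]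
  gcongr
  rw [abs_of_nonneg (by positivity)]
  nlinarith [mul_nonneg ha hb, sq_nonneg a]

theorem abs_truncated_cube_sub_expansion_cube_le {s y : ℝ} (hs₀ : 0 ≤ s) (hs₁ : s ≤ 1)
    (hy : y * (1 + s) ^ 2 = s * (2 + s)) :
    |9 / 32 * y ^ 3 * (2 / 3 + 4 / 5 * y + 6 / 7 * y ^ 2 + 8 / 9 * y ^ 3) ^ 2 -
        (s + 1 / 10 * s ^ 2 - 2 / 175 * s ^ 3 + 37 / 15750 * s ^ 4) ^ 3| ≤ 240000 * s ^ 7 := by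
  have hy' : y = s * (2 + s) / (1 + s) ^ 2 := by rw [← hy]; field_simp
  have hclear : 9 / 32 * y ^ 3 * (2 / 3 + 4 / 5 * y + 6 / 7 * y ^ 2 + 8 / 9 * y ^ 3) ^ 2 -
        (s + 1 / 10 * s ^ 2 - 2 / 175 * s ^ 3 + 37 / 15750 * s ^ 4) ^ 3 =
      (9 / 32 * (s * (2 + s)) ^ 3 * (2 / 3 * (1 + s) ^ 6 + 4 / 5 * (s * (2 + s)) * (1 + s) ^ 4 +
          6 / 7 * (s * (2 + s)) ^ 2 * (1 + s) ^ 2 + 8 / 9 * (s * (2 + s)) ^ 3) ^ 2 -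
        (s + 1 / 10 * s ^ 2 - 2 / 175 * s ^ 3 + 37 / 15750 * s ^ 4) ^ 3 * (1 + s) ^ 18) /
        (1 + s) ^ 18 := by
    rw [hy']
    field_simp
  have h1s : 0 < 1 + s := by linarith
  have hle (n : ℕ) (hn : 7 ≤ n) : s ^ n ≤ s ^ 7 := pow_le_pow_of_le_one hs₀ hs₁ hn
  have h₀ (n : ℕ) : 0 ≤ s ^ n := pow_nonneg hs₀ n
  rw [hclear, abs_div, abs_of_pos (pow_pos h1s 18), div_le_iff₀ (pow_pos h1s 18)]
  refine le_trans ?_ (le_mul_of_one_le_right (by positivity) (one_le_pow₀ (by linarith)))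
  -- the numerator is `-∑_{i=7}^{30} cᵢ sⁱ` with every `cᵢ > 0` and `∑ cᵢ < 200100`
  rw [abs_le]
  constructor
  · linarith [hle 8 (by norm_num), hle 9 (by norm_num), hle 10 (by norm_num),
      hle 11 (by norm_num), hle 12 (by norm_num), hle 13 (by norm_num), hle 14 (by norm_num),
      hle 15 (by norm_num), hle 16 (by norm_num), hle 17 (by norm_num), hle 18 (by norm_num),
      hle 19 (by norm_num), hle 20 (by norm_num), hle 21 (by norm_num), hle 22 (by norm_num),
      hle 23 (by norm_num), hle 24 (by norm_num), hle 25 (by norm_num), hle 26 (by norm_num),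
      hle 27 (by norm_num), hle 28 (by norm_num), hle 29 (by norm_num), hle 30 (by norm_num), h₀ 7]
  · linarith [h₀ 7, h₀ 8, h₀ 9, h₀ 10, h₀ 11, h₀ 12, h₀ 13, h₀ 14, h₀ 15, h₀ 16, h₀ 17, h₀ 18,
      h₀ 19, h₀ 20, h₀ 21, h₀ 22, h₀ 23, h₀ 24, h₀ 25, h₀ 26, h₀ 27, h₀ 28, h₀ 29, h₀ 30]

theorem abs_nine_div_thirtytwo_mul_sq_sub_expansion_cube_le {s x : ℝ} (hs₀ : 0 ≤ s)
    (hs₁ : s ≤ 1 / 4) (hx₀ : 0 ≤ x) (hy : x ^ 2 * (1 + s) ^ 2 = s * (2 + s)) :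
    |9 / 32 * (x / (1 - x ^ 2) - artanh x) ^ 2 -
        (s + 1 / 10 * s ^ 2 - 2 / 175 * s ^ 3 + 37 / 15750 * s ^ 4) ^ 3| ≤ 240360 * s ^ 7 := by
  have hx2 : x ^ 2 ≤ 2 * s := by
    refine le_of_mul_le_mul_right (a := (1 + s) ^ 2) ?_ (by positivity)
    rw [hy]
    nlinarith [pow_nonneg hs₀ 2, pow_nonneg hs₀ 3]
  have hx14 : x ^ 14 ≤ 128 * s ^ 7 := by
    calc x ^ 14 = (x ^ 2) ^ 7 := by ring
      _ ≤ (2 * s) ^ 7 := by gcongr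
      _ = 128 * s ^ 7 := by ring
  have hΦ := abs_sq_div_one_sub_sq_sub_artanh_sub_le hx₀ (by linarith)
  have htrunc := abs_truncated_cube_sub_expansion_cube_le hs₀ (by linarith) hy
  set Φ := x / (1 - x ^ 2) - artanh x
  set Q := 2 / 3 + 4 / 5 * x ^ 2 + 6 / 7 * (x ^ 2) ^ 2 + 8 / 9 * (x ^ 2) ^ 3
  set p := s + 1 / 10 * s ^ 2 - 2 / 175 * s ^ 3 + 37 / 15750 * s ^ 4
  rw [show 9 / 32 * Φ ^ 2 - p ^ 3 =
    9 / 32 * (Φ ^ 2 - (x ^ 2) ^ 3 * Q ^ 2) + (9 / 32 * (x ^ 2) ^ 3 * Q ^ 2 - p ^ 3) by ring]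
  refine (abs_add_le _ _).trans ?_
  rw [abs_mul, abs_of_pos (by norm_num : (0 : ℝ) < 9 / 32)]
  linarith

theorem abs_zetaHer_sub_expansion_le {s : ℝ} (hs₀ : 0 < s) (hs₁ : s ≤ 1 / 4) :
    |2 ^ (-(1 : ℝ) / 3) * zetaHer (1 + s) -
        (s + 1 / 10 * s ^ 2 - 2 / 175 * s ^ 3 + 37 / 15750 * s ^ 4)| ≤ 10 ^ 6 * s ^ 5 := by
  set x := √((1 + s) ^ 2 - 1) / (1 + s) with hx
  have hx₀ : 0 ≤ x := by positivity
  have hy : x ^ 2 * (1 + s) ^ 2 = s * (2 + s) := by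
    rw [div_pow, sq_sqrt (by nlinarith)]
    field_simp
    ring
  have hx₁ : x < 1 := by
    have hx2 : x ^ 2 < 1 :=
      lt_of_mul_lt_mul_right (a := (1 + s) ^ 2) (by rw [hy]; nlinarith) (by positivity)
    nlinarith
  have hcube := abs_nine_div_thirtytwo_mul_sq_sub_expansion_cube_le hs₀.le hs₁ hx₀ hy
  have hΦ₀ := div_one_sub_sq_sub_artanh_nonneg hx₀ hx₁
  set Φ := x / (1 - x ^ 2) - artanh x
  set p := s + 1 / 10 * s ^ 2 - 2 / 175 * s ^ 3 + 37 / 15750 * s ^ 4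
  have hζ : zetaHer (1 + s) = (3 / 4 * Φ) ^ ((2 : ℝ) / 3) := by
    rw [zetaHer, mul_sqrt_sub_log_add_sqrt_eq (by linarith) hx]
  have hg₀ : 0 ≤ 2 ^ (-(1 : ℝ) / 3) * zetaHer (1 + s) := by rw [hζ]; positivity
  have hg : (2 ^ (-(1 : ℝ) / 3) * zetaHer (1 + s)) ^ 3 = 9 / 32 * Φ ^ 2 := by
    rw [mul_pow, hζ, rpow_div_three_pow_three, rpow_div_three_pow_three (by positivity),
      rpow_neg_one, rpow_two]
    · ring
    · norm_num
  have hp : s / 2 ≤ p := by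
    have hs3 : s * s ^ 2 ≤ s * (1 / 16) := by gcongr; nlinarith
    simp only [p]
    nlinarith [pow_nonneg hs₀.le 4]
  set g := 2 ^ (-(1 : ℝ) / 3) * zetaHer (1 + s)
  refine le_of_mul_le_mul_right (a := (s / 2) ^ 2) ?_ (by positivity)
  calc |g - p| * (s / 2) ^ 2 ≤ |g - p| * p ^ 2 := by gcongr
    _ ≤ |g ^ 3 - p ^ 3| := abs_sub_mul_sq_le_abs_pow_three_sub hg₀ (by linarith)
    _ ≤ 240360 * s ^ 7 := by rwa [hg]
    _ ≤ 10 ^ 6 * s ^ 5 * (s / 2) ^ 2 := by nlinarith [pow_pos hs₀ 7]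

/-- Local expansion of the Liouville variable at the turning point `t = 1`:
`2^{−1/3}ζ(t) = (t−1) + (1/10)(t−1)² − (2/175)(t−1)³ + (37/15750)(t−1)⁴ + O((t−1)⁵)`
as `t → 1⁺`. -/
theorem stmt9 :
    (fun t : ℝ => (2 : ℝ) ^ (-(1 : ℝ) / 3) * zetaHer t -
        ((t - 1) + (1 / 10) * (t - 1) ^ 2 - (2 / 175) * (t - 1) ^ 3 +
          (37 / 15750) * (t - 1) ^ 4)) =O[nhdsWithin 1 (Set.Ioi 1)]
      (fun t : ℝ => (t - 1) ^ 5) := by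
  refine isBigO_iff.mpr ⟨10 ^ 6, ?_⟩
  filter_upwards [Ioo_mem_nhdsGT (show (1 : ℝ) < 5 / 4 by norm_num)] with t ⟨ht₁, ht₂⟩
  have h := abs_zetaHer_sub_expansion_le (sub_pos.mpr ht₁) (by linarith)
  rw [add_sub_cancel] at h
  rwa [norm_eq_abs, norm_eq_abs, abs_of_pos (pow_pos (sub_pos.mpr ht₁) 5)]
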